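/- Let m ≥ 1 and n ≥ 0 be integers, let c be the center of the star K_{1,n}, and let E*(K_m ⊠ K_{1,n}) denote the set of edges of K_m ⊠ K_{1,n} that do not lie in the subgraph induced by V(K_m) × N(c), where N(c) is the set of leaves of K_{1,n}. If Z ⊆ E(K_m ⊠ K_{1,n}) satisfies |Z ∩ E*(K_m ⊠ K_{1,n})| < ⌈m/2⌉, then γ(K_m ⊠ K_{1,n} − Z) = γ(K_m ⊠ K_{1,n}) = 1. -/
import Mathlib


open SimpleGraph Finset

/-- `D` is a dominating set of `G`: every vertex is in `D` or adjacent to a vertex of `D`. -/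
def SimpleGraph.IsDominatingSet {V : Type*} (G : SimpleGraph V) (D : Set V) : Prop :=
  ∀ v : V, v ∈ D ∨ ∃ u ∈ D, G.Adj u v

/-- The domination number of a finite graph. -/
noncomputable def SimpleGraph.dominationNumber {V : Type*} [Fintype V]
    (G : SimpleGraph V) : ℕ :=
  sInf {k | ∃ D : Finset V, D.card = k ∧ G.IsDominatingSet ↑D}

/-- The bondage number of a finite graph: the least size of a set of edges whose removal
increases the domination number. -/
noncomputable def SimpleGraph.bondageNumber {V : Type*} [Fintype V]
    (G : SimpleGraph V) : ℕ :=
  sInf {k | ∃ Z : Finset (Sym2 V), Z.card = k ∧ (↑Z : Set (Sym2 V)) ⊆ G.edgeSet ∧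
    G.dominationNumber < (G.deleteEdges ↑Z).dominationNumber}

/-- The strong product of two simple graphs. -/
def SimpleGraph.strongProd {V W : Type*} (G : SimpleGraph V) (H : SimpleGraph W) :
    SimpleGraph (V × W) :=
  SimpleGraph.fromRel (fun a b =>
    (a.1 = b.1 ∧ H.Adj a.2 b.2) ∨ (G.Adj a.1 b.1 ∧ a.2 = b.2) ∨
      (G.Adj a.1 b.1 ∧ H.Adj a.2 b.2))

infixl:70 " ⊠ " => SimpleGraph.strongProd

/-- A graph with a universal vertex has domination number one. -/
lemma aux_domNum_one {V : Type*} [Fintype V] (G : SimpleGraph V) (v : V)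
    (hv : ∀ w, w ≠ v → G.Adj v w) : G.dominationNumber = 1 := by
  have h1 : 1 ∈ {k | ∃ D : Finset V, D.card = k ∧ G.IsDominatingSet ↑D} := by
    refine ⟨{v}, by simp, fun w => ?_⟩
    by_cases hw : w = v
    · exact Or.inl (by simp [hw])
    · exact Or.inr ⟨v, by simp, hv w hw⟩
  refine le_antisymm (Nat.sInf_le h1) (le_csInf ⟨1, h1⟩ ?_)
  rintro k ⟨D, rfl, hdom⟩
  rcases hdom v with h | ⟨u, hu, _⟩
  · exact Finset.card_pos.mpr ⟨v, h⟩
  · exact Finset.card_pos.mpr ⟨u, hu⟩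

/-- The center-fiber vertices of `K_m ⊠ K_{1,n}` are universal. -/
lemma aux_center_univ (m n : ℕ) (i : Fin m) (w : Fin m × (Fin 1 ⊕ Fin n))
    (hw : w ≠ (i, Sum.inl 0)) :
    (((⊤ : SimpleGraph (Fin m)) ⊠ completeBipartiteGraph (Fin 1) (Fin n))).Adj
      (i, Sum.inl 0) w := by
  obtain ⟨j, x⟩ := w
  rw [SimpleGraph.strongProd, SimpleGraph.fromRel_adj]
  refine ⟨fun h => hw h.symm, ?_⟩
  rcases x with k | k
  · have hk : k = 0 := Subsingleton.elim _ _
    subst hk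
    have hij : i ≠ j := fun h => hw (by simp [h])
    exact Or.inl (Or.inr (Or.inl ⟨by simpa using hij, rfl⟩))
  · by_cases hij : i = j
    · exact Or.inl (Or.inl ⟨hij, by simp⟩)
    · exact Or.inl (Or.inr (Or.inr ⟨by simpa using hij, by simp⟩))

/-- There is a column `i` such that no deleted edge meets `(i, c)`. -/
lemma aux_good_column (m n : ℕ) (hm : 1 ≤ m)
    (Z : Finset (Sym2 (Fin m × (Fin 1 ⊕ Fin n))))
    (hcard : {e ∈ (↑Z : Set (Sym2 (Fin m × (Fin 1 ⊕ Fin n)))) |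
        ∃ p ∈ e, p.2 = Sum.inl 0}.ncard < (m + 1) / 2) :
    ∃ i : Fin m, ∀ e ∈ Z, (⟨i, Sum.inl 0⟩ : Fin m × (Fin 1 ⊕ Fin n)) ∉ e := by
  classical
  set P : Sym2 (Fin m × (Fin 1 ⊕ Fin n)) → Prop := fun e => ∃ p ∈ e, p.2 = Sum.inl 0 with hP
  set S : Finset (Sym2 (Fin m × (Fin 1 ⊕ Fin n))) := Z.filter P with hS
  have hset : {e ∈ (↑Z : Set (Sym2 (Fin m × (Fin 1 ⊕ Fin n)))) |
        ∃ p ∈ e, p.2 = Sum.inl 0} = ↑S := by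
    ext e; simp [hS, hP]
  rw [hset, Set.ncard_coe_finset] at hcard
  set f : Sym2 (Fin m × (Fin 1 ⊕ Fin n)) → Finset (Fin m) :=
    Sym2.lift ⟨fun a b => {a.1, b.1}, fun a b => Finset.pair_comm _ _⟩ with hf
  have hcb : (S.biUnion f).card ≤ S.card * 2 := by
    refine Finset.card_biUnion_le_card_mul _ _ _ (fun e _ => ?_)
    induction e using Sym2.ind with
    | _ a b => simpa [hf] using (Finset.card_insert_le a.1 {b.1}).trans (by simp)
  have hlt : (S.biUnion f).card < m := by omega
  have : ∃ i : Fin m, i ∉ S.biUnion f := by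
    by_contra h
    push_neg at h
    have : (Finset.univ : Finset (Fin m)).card ≤ (S.biUnion f).card :=
      Finset.card_le_card (fun i _ => h i)
    simp at this
    omega
  obtain ⟨i, hi⟩ := this
  refine ⟨i, fun e he hmem => hi ?_⟩
  have heS : e ∈ S := Finset.mem_filter.mpr ⟨he, ⟨_, hmem, rfl⟩⟩
  refine Finset.mem_biUnion.mpr ⟨e, heS, ?_⟩
  induction e using Sym2.ind with
  | _ a b =>
    rcases Sym2.mem_iff.mp hmem with h | h <;> simp [hf, ← h]

/-- **Lemma.** Let `c = Sum.inl 0` be the center of the star `K_{1,n}`, and let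
`E*(K_m ⊠ K_{1,n})` be the set of edges of `K_m ⊠ K_{1,n}` not lying inside
`V(K_m) × N(c)` (equivalently, the edges with at least one endpoint in the fiber
`V(K_m) × {c}`).  If `Z ⊆ E(K_m ⊠ K_{1,n})` with `|Z ∩ E*(K_m ⊠ K_{1,n})| < ⌈m/2⌉`,
then `γ(K_m ⊠ K_{1,n} − Z) = γ(K_m ⊠ K_{1,n}) = 1`. -/
theorem dominationNumber_strongProd_star_deleteEdges (m n : ℕ) (hm : 1 ≤ m)
    (Z : Finset (Sym2 (Fin m × (Fin 1 ⊕ Fin n))))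
    (hZ : (↑Z : Set (Sym2 (Fin m × (Fin 1 ⊕ Fin n)))) ⊆
      ((⊤ : SimpleGraph (Fin m)) ⊠ completeBipartiteGraph (Fin 1) (Fin n)).edgeSet)
    (hcard : {e ∈ (↑Z : Set (Sym2 (Fin m × (Fin 1 ⊕ Fin n)))) |
        ∃ p ∈ e, p.2 = Sum.inl 0}.ncard < (m + 1) / 2) :
    (((⊤ : SimpleGraph (Fin m)) ⊠ completeBipartiteGraph (Fin 1) (Fin n)).deleteEdges
        ↑Z).dominationNumber = 1 ∧
    ((⊤ : SimpleGraph (Fin m)) ⊠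
        completeBipartiteGraph (Fin 1) (Fin n)).dominationNumber = 1 := by
  obtain ⟨i, hi⟩ := aux_good_column m n hm Z hcard
  constructor
  · refine aux_domNum_one _ (⟨i, Sum.inl 0⟩ : Fin m × (Fin 1 ⊕ Fin n)) (fun w hw => ?_)
    rw [SimpleGraph.deleteEdges_adj]
    refine ⟨aux_center_univ m n i w hw, fun hmem => ?_⟩
    exact hi _ hmem (Sym2.mem_mk_left _ _)
  · exact aux_domNum_one _ (⟨i, Sum.inl 0⟩ : Fin m × (Fin 1 ⊕ Fin n))
      (fun w hw => aux_center_univ m n i w hw)
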